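/- Suppose $\alpha(u):=\#\{j: 1/p_j\le u\}$ is regularly varying at $\infty$ of order $\gamma\in(0,1)$. Let $\sigma_n\to\sigma\in(0,1)$, let $M_{n,j}\sim\mathrm{Binomial}(n,p_j)$ be independent over $j$, and let $k_n\ge n$ with $k_n-n=O(\sqrt n)$. Then (a) $\sum_{j=1}^\infty \mathbb{E}\bigl(1_{M_{k_n,j}\ge 1}-1_{M_{n,j}\ge 1}\bigr)=o\bigl(\alpha(n)^{1/2}\bigr)$. (b) If moreover there exists a continuously differentiable function $L:[1,\infty)\to\mathbb{R}$ with $|\alpha(u)-u^\gamma L(u)|\le C u^\beta$ for every $u>1$, some $C>0$ and $\beta<\gamma$, and $|L'(u)|\le C_\delta u^{-1+\delta}$ for every $u>1$, every $\delta>0$ and some $C_\delta>0$, then $\sum_{j=1}^\infty \mathbb{E}\bigl(g_{\sigma_n}(M_{k_n,j})-g_{\sigma_n}(M_{n,j})\bigr)=o\bigl(\alpha(n)^{1/2}\bigr)$. -/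

import Mathlib

/-!
One extra trial changes a binomial expectation by `q · E[Δg(M_n)]`, where
`Δg(m) = g(m+1) - g(m)`. Both `1_{m ≥ 1}` and `g_σ` (uniformly for `σ`
bounded away from `1`) satisfy `0 ≤ Δg(m) ≤ K/(m+1)`, and `q · E[1/(M_n+1)] ≤ 1/(n+1)`, so one
trial costs at most `K · min(q, 1/(n+1)) ≤ K n^(θ-1) q^θ` for every `θ ∈ [0,1]`. Over the
`k_n - n = O(√n)` extra trials and all `j`, the increment is `O(n^(θ-1/2) ∑_j p_j^θ)`.

Iterating the doubling limit `α(2n)/α(n) → 2^γ` gives `c n^a ≤ α(n) ≤ C n^b` for any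
`0 ≤ a < γ < b`. The upper bound makes `∑_j p_j^θ` finite for `θ > b`, the lower bound makes
`n^(θ-1/2) = o(α(n)^(1/2))` once `2θ - 1 < a`, and since `γ < 1` such exponents exist.
-/

open Filter Topology Real Set

noncomputable section

/-- `α(u) = #{j : 1/p_j ≤ u}`, as a real number. -/
def alpha0 (p : ℕ → ℝ) (u : ℝ) : ℝ := (Nat.card {j : ℕ | 1 / p j ≤ u} : ℝ)

/-- A function `α` is regularly varying at `∞` of order `γ` if `α(nu)/α(n) → u^γ` for all `u>0`. -/
def RegularlyVarying (α : ℝ → ℝ) (γ : ℝ) : Prop :=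
  ∀ u : ℝ, 0 < u → Tendsto (fun n : ℕ => α ((n : ℝ) * u) / α (n : ℝ)) atTop (𝓝 (u ^ γ))

/-- `g_σ(m) = ∑_{l=1}^{m-1} 1/(l-σ)` (with `g_σ(0) = g_σ(1) = 0`). -/
def gfun (σ : ℝ) (m : ℕ) : ℝ := ∑ l ∈ Finset.Icc 1 (m - 1), (1 : ℝ) / ((l : ℝ) - σ)

/-- Expectation of `g(M)` for `M ∼ Poisson(lam)`. -/
def Epois (lam : ℝ) (g : ℕ → ℝ) : ℝ :=
  ∑' m : ℕ, g m * (Real.exp (-lam) * lam ^ m / (Nat.factorial m : ℝ))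

/-- Expectation of `g(M)` for `M ∼ Binomial(n, q)`. -/
def Ebin (n : ℕ) (q : ℝ) (g : ℕ → ℝ) : ℝ :=
  ∑ m ∈ Finset.range (n + 1),
    g m * ((n.choose m : ℝ) * q ^ m * (1 - q) ^ (n - m))

lemma min_le_rpow_mul_rpow {a b θ : ℝ} (ha : 0 ≤ a) (hb : 0 ≤ b) (hθ : θ ∈ Icc (0 : ℝ) 1) :
    min a b ≤ a ^ θ * b ^ (1 - θ) := by
  have hmin : 0 ≤ min a b := le_min ha hb
  calc min a b = min a b ^ θ * min a b ^ (1 - θ) := by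
        rw [← Real.rpow_add' hmin (by norm_num), add_sub_cancel, Real.rpow_one]
    _ ≤ a ^ θ * b ^ (1 - θ) := by
        gcongr
        · exact hθ.1
        · exact min_le_left a b
        · linarith [hθ.2]
        · exact min_le_right a b

lemma sub_mem_Icc_of_forall_succ_sub_mem_Icc {f : ℕ → ℝ} {n k : ℕ} {B : ℝ} (hnk : n ≤ k)
    (hf : ∀ m, n ≤ m → f (m + 1) - f m ∈ Icc 0 B) : f k - f n ∈ Icc 0 ((k - n : ℝ) * B) := by
  induction k, hnk using Nat.le_induction with
  | base => simp
  | succ k hnk ih =>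
    have := hf k hnk
    push_cast
    constructor <;> linarith [this.1, this.2, ih.1, ih.2]

lemma Ebin_const_mul (n : ℕ) (q c : ℝ) (g : ℕ → ℝ) :
    Ebin n q (fun m => c * g m) = c * Ebin n q g := by
  simp only [Ebin, Finset.mul_sum, mul_assoc]

lemma Ebin_sub (n : ℕ) (q : ℝ) (g h : ℕ → ℝ) :
    Ebin n q (fun m => g m - h m) = Ebin n q g - Ebin n q h := by
  simp only [Ebin, sub_mul, Finset.sum_sub_distrib]

lemma Ebin_le_Ebin {n : ℕ} {q : ℝ} (hq : q ∈ Icc (0 : ℝ) 1) {g h : ℕ → ℝ} (hgh : ∀ m, g m ≤ h m) :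
    Ebin n q g ≤ Ebin n q h :=
  Finset.sum_le_sum fun m _ => mul_le_mul_of_nonneg_right (hgh m) (by
    have := sub_nonneg.2 hq.2; have := hq.1; positivity)

lemma Ebin_one (n : ℕ) (q : ℝ) : Ebin n q (fun _ => 1) = 1 := by
  simpa [Ebin, mul_comm, mul_left_comm, mul_assoc] using (add_pow q (1 - q) n).symm

lemma Ebin_const (n : ℕ) (q c : ℝ) : Ebin n q (fun _ => c) = c := by
  simpa [Ebin_one] using Ebin_const_mul n q c fun _ => 1

lemma choose_succ_succ_mul_pow_mul_one_sub_pow (n m : ℕ) (q : ℝ) :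
    ((n + 1).choose (m + 1) : ℝ) * q ^ (m + 1) * (1 - q) ^ (n - m) =
      q * ((n.choose m : ℝ) * q ^ m * (1 - q) ^ (n - m)) +
        (1 - q) * ((n.choose (m + 1) : ℝ) * q ^ (m + 1) * (1 - q) ^ (n - (m + 1))) := by
  rcases lt_or_ge m n with hmn | hnm
  · obtain ⟨d, rfl⟩ := Nat.exists_eq_add_of_lt hmn
    rw [Nat.choose_succ_succ', show m + d + 1 - m = d + 1 by omega,
      show m + d + 1 - (m + 1) = d by omega]
    push_cast; ring
  · rw [Nat.choose_succ_succ', Nat.choose_eq_zero_of_lt (by omega : n < m + 1)]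
    push_cast; ring

/-- Conditioning on the last trial: `M_{n+1} = M_n + Bernoulli(q)`. -/
lemma Ebin_succ (n : ℕ) (q : ℝ) (g : ℕ → ℝ) :
    Ebin (n + 1) q g = (1 - q) * Ebin n q g + q * Ebin n q (fun m => g (m + 1)) := by
  have shift : Ebin n q g = ∑ m ∈ Finset.range (n + 1),
      g (m + 1) * ((n.choose (m + 1) : ℝ) * q ^ (m + 1) * (1 - q) ^ (n - (m + 1))) +
      g 0 * (1 - q) ^ n := by
    rw [Finset.sum_range_succ, Nat.choose_eq_zero_of_lt (Nat.lt_succ_self n), Ebin,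
      Finset.sum_range_succ']
    simp
  rw [Ebin, Finset.sum_range_succ', shift, Ebin, Finset.mul_sum]
  simp only [Nat.add_sub_add_right, choose_succ_succ_mul_pow_mul_one_sub_pow, mul_add, Finset.sum_add_distrib,
    Finset.mul_sum]
  simp only [mul_left_comm (g _), Nat.choose_zero_right, Nat.sub_zero, pow_succ]
  ring

lemma Ebin_succ_sub (n : ℕ) (q : ℝ) (g : ℕ → ℝ) :
    Ebin (n + 1) q g - Ebin n q g = q * Ebin n q (fun m => g (m + 1) - g m) := by
  rw [Ebin_succ, Ebin_sub]; ring

lemma Ebin_ite_eq_zero (n : ℕ) (q : ℝ) :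
    Ebin n q (fun m => if m = 0 then 0 else 1) = 1 - (1 - q) ^ n := by
  have h : Ebin n q (fun m => if m = 0 then 0 else 1) + (1 - q) ^ n = Ebin n q (fun _ => 1) := by
    simp only [Ebin]
    rw [Finset.sum_range_succ', Finset.sum_range_succ']
    simp
  rw [Ebin_one] at h
  linarith

lemma mul_Ebin_inv_succ (n : ℕ) (q : ℝ) :
    q * Ebin n q (fun m => 1 / ((m : ℝ) + 1)) = (1 - (1 - q) ^ (n + 1)) / (n + 1) := by
  rw [eq_div_iff (by positivity), ← Ebin_ite_eq_zero, Ebin, Ebin, Finset.sum_range_succ' _ (n + 1),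
    Finset.mul_sum, Finset.sum_mul]
  simp only [Nat.add_sub_add_right, Nat.succ_ne_zero, if_false, if_true, one_mul, zero_mul,
    add_zero]
  refine Finset.sum_congr rfl fun m _ => ?_
  have h : ((n : ℝ) + 1) * n.choose m = (n + 1).choose (m + 1) * ((m : ℝ) + 1) := by
    exact_mod_cast Nat.add_one_mul_choose_eq n m
  field_simp
  linear_combination q ^ (m + 1) * (1 - q) ^ (n - m) * h

lemma Ebin_succ_sub_mem_Icc {n : ℕ} {q K : ℝ} (hq : q ∈ Icc (0 : ℝ) 1) {g : ℕ → ℝ}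
    (hg : ∀ m : ℕ, g (m + 1) - g m ∈ Icc 0 (K / (m + 1))) :
    Ebin (n + 1) q g - Ebin n q g ∈ Icc 0 (K * min q (1 / (n + 1))) := by
  have hK : 0 ≤ K := by simpa using (hg 0).1.trans (hg 0).2
  have hmean_nonneg : 0 ≤ Ebin n q (fun m => g (m + 1) - g m) := by
    simpa [Ebin_const] using Ebin_le_Ebin (n := n) hq fun m => (hg m).1
  have hmean_le : Ebin n q (fun m => g (m + 1) - g m) ≤ K := by
    simpa [Ebin_const] using Ebin_le_Ebin (n := n) hq fun m =>
      (hg m).2.trans (div_le_self hK (by linarith [m.cast_nonneg (α := ℝ)]))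
  have hmean_le_inv : q * Ebin n q (fun m => g (m + 1) - g m) ≤ K * (1 / (n + 1)) := by
    calc q * Ebin n q (fun m => g (m + 1) - g m)
        ≤ q * Ebin n q (fun m => K * (1 / ((m : ℝ) + 1))) := mul_le_mul_of_nonneg_left
          (Ebin_le_Ebin hq fun m => (hg m).2.trans_eq (div_eq_mul_one_div K _)) hq.1
      _ = K * ((1 - (1 - q) ^ (n + 1)) / (n + 1)) := by
          rw [Ebin_const_mul, mul_left_comm, mul_Ebin_inv_succ]
      _ ≤ K * (1 / (n + 1)) := by
          gcongr
          linarith [pow_nonneg (sub_nonneg.2 hq.2) (n + 1)]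
  rw [Ebin_succ_sub, mul_min_of_nonneg _ _ hK]
  exact ⟨mul_nonneg hq.1 hmean_nonneg, le_min (by nlinarith [hq.1]) hmean_le_inv⟩

lemma Ebin_sub_mem_Icc {n k : ℕ} (hn : 0 < n) (hnk : n ≤ k) {q K θ : ℝ} (hq : q ∈ Icc (0 : ℝ) 1)
    (hθ : θ ∈ Icc (0 : ℝ) 1) {g : ℕ → ℝ} (hg : ∀ m : ℕ, g (m + 1) - g m ∈ Icc 0 (K / (m + 1))) :
    Ebin k q g - Ebin n q g ∈ Icc 0 ((k - n : ℝ) * K * (n : ℝ) ^ (θ - 1) * q ^ θ) := by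
  have hK : 0 ≤ K := by simpa using (hg 0).1.trans (hg 0).2
  simp only [mul_assoc]
  refine sub_mem_Icc_of_forall_succ_sub_mem_Icc (f := fun m => Ebin m q g) hnk fun m hm => ?_
  obtain ⟨h0, h1⟩ := Ebin_succ_sub_mem_Icc (n := m) hq hg
  have hm' : (0 : ℝ) < m + 1 := by positivity
  refine ⟨h0, h1.trans ?_⟩
  calc K * min q (1 / (m + 1))
      ≤ K * (q ^ θ * (1 / ((m : ℝ) + 1)) ^ (1 - θ)) := by
        gcongr; exact min_le_rpow_mul_rpow hq.1 (by positivity) hθ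
    _ = K * (((m : ℝ) + 1) ^ (θ - 1) * q ^ θ) := by
        rw [one_div, Real.inv_rpow hm'.le, ← Real.rpow_neg hm'.le, neg_sub]; ring
    _ ≤ K * ((n : ℝ) ^ (θ - 1) * q ^ θ) := by
        have hmn : (n : ℝ) ≤ m + 1 := by exact_mod_cast hm.trans (Nat.le_succ m)
        have := Real.rpow_le_rpow_of_nonpos (by exact_mod_cast hn) hmn
          (by linarith [hθ.2] : θ - 1 ≤ 0)
        have := Real.rpow_nonneg hq.1 θ
        gcongr

lemma tsum_Ebin_sub_mem_Icc {p : ℕ → ℝ} (hp : ∀ j, p j ∈ Icc (0 : ℝ) 1) {θ : ℝ}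
    (hθ : θ ∈ Icc (0 : ℝ) 1) (hsum : Summable fun j => p j ^ θ) {n k : ℕ} (hn : 0 < n)
    (hnk : n ≤ k) {K : ℝ} {g : ℕ → ℝ} (hg : ∀ m : ℕ, g (m + 1) - g m ∈ Icc 0 (K / (m + 1))) :
    ∑' j, (Ebin k (p j) g - Ebin n (p j) g) ∈
      Icc 0 ((k - n : ℝ) * K * (n : ℝ) ^ (θ - 1) * ∑' j, p j ^ θ) := by
  have h := fun j => Ebin_sub_mem_Icc hn hnk (hp j) hθ hg
  have hsum' := hsum.mul_left ((k - n : ℝ) * K * (n : ℝ) ^ (θ - 1))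
  refine ⟨tsum_nonneg fun j => (h j).1, ?_⟩
  rw [← tsum_mul_left]
  exact (hsum'.of_nonneg_of_le (fun j => (h j).1) fun j => (h j).2).tsum_le_tsum
    (fun j => (h j).2) hsum'

lemma ite_eq_zero_succ_sub_mem_Icc (m : ℕ) :
    ((if m + 1 = 0 then 0 else 1) - (if m = 0 then 0 else 1) : ℝ) ∈ Icc 0 (1 / ((m : ℝ) + 1)) := by
  rcases m with _ | m
  · simp
  · simpa using (by positivity : (0 : ℝ) ≤ m + 1 + 1)

lemma gfun_succ_sub (σ : ℝ) (m : ℕ) :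
    gfun σ (m + 1) - gfun σ m = if m = 0 then 0 else 1 / ((m : ℝ) - σ) := by
  rcases m with _ | m
  · simp [gfun]
  · simp [gfun, Finset.sum_Icc_succ_top]

lemma gfun_succ_sub_mem_Icc {σ s : ℝ} (hσs : σ ≤ s) (hs : s ∈ Ico (0 : ℝ) 1) (m : ℕ) :
    gfun σ (m + 1) - gfun σ m ∈ Icc 0 (2 / (1 - s) / (m + 1)) := by
  have h1 : (0 : ℝ) < 1 - s := by linarith [hs.2]
  rw [gfun_succ_sub]
  rcases m with _ | m
  · simp only [if_true]; exact ⟨le_rfl, by positivity⟩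
  · have h2 : (0 : ℝ) < (m + 1 : ℕ) - σ := by push_cast; linarith [hs.2, m.cast_nonneg (α := ℝ)]
    simp only [Nat.succ_ne_zero, if_false]
    refine ⟨by positivity, ?_⟩
    rw [div_div, div_le_div_iff₀ h2 (by positivity)]
    push_cast
    nlinarith [hs.1, m.cast_nonneg (α := ℝ)]

section CountingFunction

variable {p : ℕ → ℝ}

lemma finite_setOf_one_div_le (hp : ∀ j, 0 < p j) (hp0 : Tendsto p atTop (𝓝 0)) (u : ℝ) :
    {j : ℕ | 1 / p j ≤ u}.Finite := by
  rcases le_or_gt u 0 with hu | hu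
  · refine Set.finite_empty.subset fun j hj => ?_
    exact absurd (hu.trans_lt' ((one_div_pos.2 (hp j)).trans_le hj)) (lt_irrefl 0)
  · have hsmall : ∀ᶠ j in cofinite, p j < 1 / u := by
      rw [Nat.cofinite_eq_atTop]; exact hp0.eventually (gt_mem_nhds (one_div_pos.2 hu))
    refine (Filter.eventually_cofinite.1 hsmall).subset fun j hj => ?_
    exact not_lt.2 ((one_div_le (hp j) hu).1 hj)

lemma ncard_le_alpha0 (hp : ∀ j, 0 < p j) (hp0 : Tendsto p atTop (𝓝 0)) {s : Set ℕ} {u : ℝ}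
    (hs : ∀ j ∈ s, 1 / p j ≤ u) : (s.ncard : ℝ) ≤ alpha0 p u := by
  rw [alpha0, Nat.card_coe_set_eq]
  exact_mod_cast Set.ncard_le_ncard hs (finite_setOf_one_div_le hp hp0 u)

lemma alpha0_mono (hp : ∀ j, 0 < p j) (hp0 : Tendsto p atTop (𝓝 0)) : Monotone (alpha0 p) :=
  fun _ _ huv => ncard_le_alpha0 hp hp0 fun _ hj => le_trans hj huv

lemma eventually_alpha0_pos (hp : ∀ j, 0 < p j) (hp0 : Tendsto p atTop (𝓝 0)) :
    ∀ᶠ n : ℕ in atTop, 0 < alpha0 p n := by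
  filter_upwards [tendsto_natCast_atTop_atTop.eventually_ge_atTop (1 / p 0)] with n hn
  exact zero_lt_one.trans_le (by simpa using ncard_le_alpha0 hp hp0 (s := {0}) (by simpa using hn))

/-- Dyadic shells: at most `α(2^(i+1)) ≤ C 2^((i+1) b)` indices have `2^i ≤ 1/p_j < 2^(i+1)`,
each contributing at most `2^(-iθ)`, so the sum is dominated by a geometric series. -/
lemma summable_rpow_of_alpha0_le (hp : ∀ j, 0 < p j) (hp1 : ∀ j, p j ≤ 1)
    (hp0 : Tendsto p atTop (𝓝 0)) {C b θ : ℝ} (hθ : 0 ≤ θ) (hbθ : b < θ)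
    (hα : ∀ u, 1 ≤ u → alpha0 p u ≤ C * u ^ b) : Summable fun j => p j ^ θ := by
  choose g hg using fun j => exists_nat_pow_near (one_le_one_div (hp j) (hp1 j)) one_lt_two
  set x : ℝ := 2 ^ (b - θ) with hx
  have hx0 : 0 ≤ x := by positivity
  have hx1 : x < 1 := Real.rpow_lt_one_of_one_lt_of_neg one_lt_two (by linarith)
  have hC : 0 ≤ C := by simpa using (Nat.cast_nonneg _).trans (hα 1 le_rfl)
  have hshell : ∀ (i : ℕ) (F : Finset ℕ), (∀ j ∈ F, g j = i) →
      ∑ j ∈ F, p j ^ θ ≤ C * 2 ^ b * x ^ i := by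
    intro i F hF
    have hcard : (F.card : ℝ) ≤ C * ((2 : ℝ) ^ (i + 1)) ^ b := by
      rw [← Set.ncard_coe_finset]
      exact (ncard_le_alpha0 hp hp0 fun j hj => (hF j hj) ▸ (hg j).2.le).trans
        (hα _ (one_le_pow₀ one_le_two))
    have hterm : ∀ j ∈ F, p j ^ θ ≤ (((2 : ℝ) ^ i)⁻¹) ^ θ := fun j hj => by
      refine Real.rpow_le_rpow (hp j).le ?_ hθ
      rw [← hF j hj, le_inv_comm₀ (hp j) (by positivity), ← one_div]
      exact (hg j).1
    calc ∑ j ∈ F, p j ^ θ ≤ F.card * (((2 : ℝ) ^ i)⁻¹) ^ θ := by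
          simpa using Finset.sum_le_sum hterm
      _ ≤ C * ((2 : ℝ) ^ (i + 1)) ^ b * (((2 : ℝ) ^ i)⁻¹) ^ θ := by gcongr
      _ = C * 2 ^ b * x ^ i := by
          rw [pow_succ, Real.mul_rpow (by positivity) (by positivity),
            Real.inv_rpow (by positivity), ← Real.rpow_pow_comm (by norm_num),
            ← Real.rpow_pow_comm (by norm_num), hx, Real.rpow_sub two_pos, div_pow]
          field_simp
  refine summable_of_sum_le (c := ∑' i, C * 2 ^ b * x ^ i)
    (fun j => Real.rpow_nonneg (hp j).le θ) fun F => ?_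
  rw [← Finset.sum_fiberwise_of_maps_to fun j hj => Finset.mem_image_of_mem g hj]
  exact (Finset.sum_le_sum fun i _ => hshell i _ fun j hj => (Finset.mem_filter.1 hj).2).trans
    ((summable_geometric_of_lt_one hx0 hx1).mul_left _ |>.sum_le_tsum _ fun i _ => by positivity)

end CountingFunction

section Doubling

variable {f : ℝ → ℝ} {n₀ : ℕ}

lemma le_pow_mul_of_doubling {r : ℝ} (hr : 0 ≤ r) (hd : ∀ n : ℕ, n₀ ≤ n → f (n * 2) ≤ r * f n)
    (k : ℕ) : f (2 ^ k * n₀) ≤ r ^ k * f n₀ := by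
  induction k with
  | zero => simp
  | succ k ih =>
    have h := hd (2 ^ k * n₀) (Nat.le_mul_of_pos_left n₀ (by positivity))
    push_cast at h
    calc f (2 ^ (k + 1) * n₀) = f (2 ^ k * n₀ * 2) := by ring_nf
      _ ≤ r * f (2 ^ k * n₀) := h
      _ ≤ r ^ (k + 1) * f n₀ := by rw [pow_succ', mul_assoc]; exact mul_le_mul_of_nonneg_left ih hr

lemma Monotone.le_mul_rpow_of_doubling (hf : Monotone f) {b : ℝ} (hb : 0 ≤ b) (hn₀ : 0 < n₀)
    (h₀ : 0 ≤ f n₀) (hd : ∀ n : ℕ, n₀ ≤ n → f (n * 2) ≤ 2 ^ b * f n) {u : ℝ} (hu : 1 ≤ u) :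
    f u ≤ f n₀ * (2 * u) ^ b := by
  have hn₀' : (1 : ℝ) ≤ n₀ := by exact_mod_cast hn₀
  rcases le_or_gt u n₀ with hun | hun
  · exact (hf hun).trans (le_mul_of_one_le_right h₀ (Real.one_le_rpow (by linarith) hb))
  obtain ⟨k, hk, hk'⟩ := exists_nat_pow_near ((one_le_div (by linarith)).2 hun.le) one_lt_two
  rw [div_lt_iff₀ (by linarith)] at hk'
  calc f u ≤ f (2 ^ (k + 1) * n₀) := hf hk'.le
    _ ≤ ((2 : ℝ) ^ b) ^ (k + 1) * f n₀ := le_pow_mul_of_doubling (by positivity) hd (k + 1)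
    _ = f n₀ * (2 * 2 ^ k) ^ b := by
        rw [Real.mul_rpow (by norm_num) (by positivity), ← Real.rpow_pow_comm (by norm_num),
          pow_succ']
        ring
    _ ≤ f n₀ * (2 * u) ^ b := by
        gcongr
        exact hk.trans (div_le_self (by linarith) hn₀')

lemma Monotone.mul_rpow_le_of_doubling (hf : Monotone f) {a : ℝ} (ha : 0 ≤ a) (hn₀ : 0 < n₀)
    (h₀ : 0 ≤ f n₀) (hd : ∀ n : ℕ, n₀ ≤ n → 2 ^ a * f n ≤ f (n * 2)) {u : ℝ} (hu : n₀ ≤ u) :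
    f n₀ * (u / (2 * n₀)) ^ a ≤ f u := by
  have hn₀' : (0 : ℝ) < n₀ := by exact_mod_cast hn₀
  obtain ⟨k, hk, hk'⟩ := exists_nat_pow_near ((one_le_div hn₀').2 hu) one_lt_two
  have hchain := le_pow_mul_of_doubling (f := fun x => -f x) (r := 2 ^ a) (by positivity)
    (fun n hn => by simpa [neg_le_neg_iff] using hd n hn) k
  have hu₂ : u / (2 * n₀) ≤ 2 ^ k := by
    rw [div_lt_iff₀ hn₀', pow_succ] at hk'
    rw [div_le_iff₀ (by positivity)]
    linarith
  calc f n₀ * (u / (2 * n₀)) ^ a ≤ f n₀ * ((2 : ℝ) ^ k) ^ a :=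
        mul_le_mul_of_nonneg_left
          (Real.rpow_le_rpow (div_nonneg (hn₀'.le.trans hu) (by positivity)) hu₂ ha) h₀
    _ = ((2 : ℝ) ^ a) ^ k * f n₀ := by rw [← Real.rpow_pow_comm (by norm_num)]; ring
    _ ≤ f (2 ^ k * n₀) := by simpa using hchain
    _ ≤ f u := hf (by rwa [le_div_iff₀ hn₀'] at hk)

end Doubling

lemma RegularlyVarying.exists_rpow_bounds {f : ℝ → ℝ} {γ a b : ℝ} (hRV : RegularlyVarying f γ)
    (hf : Monotone f) (hpos : ∀ᶠ n : ℕ in atTop, 0 < f n) (ha : 0 ≤ a) (haγ : a < γ)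
    (hγb : γ < b) :
    ∃ C c : ℝ, 0 < c ∧ (∀ u, 1 ≤ u → f u ≤ C * u ^ b) ∧
      ∀ᶠ n : ℕ in atTop, c * (n : ℝ) ^ a ≤ f n := by
  have hratio := (hRV 2 two_pos).eventually (Ioo_mem_nhds
    (Real.rpow_lt_rpow_of_exponent_lt one_lt_two haγ)
    (Real.rpow_lt_rpow_of_exponent_lt one_lt_two hγb))
  obtain ⟨n₀, hn₀⟩ := eventually_atTop.1 (hratio.and (hpos.and (eventually_gt_atTop 0)))
  have hd : ∀ n : ℕ, n₀ ≤ n → 2 ^ a * f n ≤ f (n * 2) ∧ f (n * 2) ≤ 2 ^ b * f n := fun n hn => by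
    obtain ⟨⟨h₁, h₂⟩, hfn, -⟩ := hn₀ n hn
    exact ⟨((lt_div_iff₀ hfn).1 h₁).le, ((div_lt_iff₀ hfn).1 h₂).le⟩
  obtain ⟨-, hf₀, hn₀pos⟩ := hn₀ n₀ le_rfl
  have hn₀' : (0 : ℝ) < n₀ := by exact_mod_cast hn₀pos
  refine ⟨f n₀ * 2 ^ b, f n₀ / (2 * n₀) ^ a, by positivity, fun u hu => ?_, ?_⟩
  · calc f u ≤ f n₀ * (2 * u) ^ b :=
          hf.le_mul_rpow_of_doubling (ha.trans (haγ.trans hγb).le) hn₀pos hf₀.le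
            (fun n hn => (hd n hn).2) hu
      _ = f n₀ * 2 ^ b * u ^ b := by rw [Real.mul_rpow (by norm_num) (by linarith)]; ring
  · filter_upwards [eventually_ge_atTop n₀] with n hn
    calc f n₀ / (2 * n₀) ^ a * (n : ℝ) ^ a = f n₀ * ((n : ℝ) / (2 * n₀)) ^ a := by
          rw [Real.div_rpow (by positivity) (by positivity)]; ring
      _ ≤ f n := hf.mul_rpow_le_of_doubling ha hn₀pos hf₀.le (fun n hn => (hd n hn).1)
          (by exact_mod_cast hn)

lemma tendsto_div_sqrt_of_le_rpow {F α : ℕ → ℝ} {K c e a : ℝ} (hc : 0 < c) (hea : 2 * e < a)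
    (hF : ∀ᶠ n : ℕ in atTop, F n ∈ Icc 0 (K * (n : ℝ) ^ e))
    (hα : ∀ᶠ n : ℕ in atTop, c * (n : ℝ) ^ a ≤ α n) :
    Tendsto (fun n => F n / √(α n)) atTop (𝓝 0) := by
  have hlim : Tendsto (fun n : ℕ => K / √c * (n : ℝ) ^ (e - a / 2)) atTop (𝓝 0) := by
    have := ((tendsto_rpow_neg_atTop (by linarith : 0 < a / 2 - e)).comp
      tendsto_natCast_atTop_atTop).const_mul (K / √c)
    simpa [Function.comp_def] using this
  refine squeeze_zero' ?_ ?_ hlim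
  · filter_upwards [hF] with n hFn using div_nonneg hFn.1 (Real.sqrt_nonneg _)
  filter_upwards [hF, hα, eventually_gt_atTop 0] with n hFn hαn hn
  have hn' : (0 : ℝ) < n := by exact_mod_cast hn
  have hcn : 0 < c * (n : ℝ) ^ a := by positivity
  calc F n / √(α n) ≤ K * (n : ℝ) ^ e / √(c * (n : ℝ) ^ a) :=
        div_le_div₀ (hFn.1.trans hFn.2) hFn.2 (Real.sqrt_pos.2 hcn) (Real.sqrt_le_sqrt hαn)
    _ = K / √c * (n : ℝ) ^ (e - a / 2) := by
        rw [Real.sqrt_mul hc.le, Real.sqrt_eq_rpow ((n : ℝ) ^ a), ← Real.rpow_mul hn'.le,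
          Real.rpow_sub hn']
        field_simp

lemma tendsto_tsum_Ebin_sub_div_sqrt {p : ℕ → ℝ} (hp : ∀ j, p j ∈ Icc (0 : ℝ) 1) {θ a c : ℝ}
    (hθ : θ ∈ Icc (0 : ℝ) 1) (hθa : 2 * θ - 1 < a) (hsum : Summable fun j => p j ^ θ)
    {α : ℕ → ℝ} (hc : 0 < c) (hα : ∀ᶠ n : ℕ in atTop, c * (n : ℝ) ^ a ≤ α n)
    {k : ℕ → ℕ} (hk1 : ∀ n, n ≤ k n) (hk2 : ∃ C : ℝ, ∀ n : ℕ, ((k n : ℝ) - (n : ℝ)) ≤ C * √(n : ℝ))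
    ⦃K : ℝ⦄ ⦃G : ℕ → ℕ → ℝ⦄
    (hG : ∀ᶠ n in atTop, ∀ m : ℕ, G n (m + 1) - G n m ∈ Icc 0 (K / (m + 1))) :
    Tendsto (fun n => (∑' j, (Ebin (k n) (p j) (G n) - Ebin n (p j) (G n))) / √(α n))
      atTop (𝓝 0) := by
  obtain ⟨C, hC⟩ := hk2
  refine tendsto_div_sqrt_of_le_rpow (K := C * K * ∑' j, p j ^ θ) (e := θ - 1 / 2) hc
    (by linarith) ?_ hα
  filter_upwards [hG, eventually_gt_atTop 0] with n hGn hn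
  have hK : 0 ≤ K := by simpa using (hGn 0).1.trans (hGn 0).2
  have hn' : (0 : ℝ) < n := by exact_mod_cast hn
  obtain ⟨h0, h1⟩ := tsum_Ebin_sub_mem_Icc hp hθ hsum hn (hk1 n) hGn
  refine ⟨h0, h1.trans ?_⟩
  have hS : 0 ≤ ∑' j, p j ^ θ := tsum_nonneg fun j => Real.rpow_nonneg (hp j).1 θ
  calc ((k n : ℝ) - n) * K * (n : ℝ) ^ (θ - 1) * ∑' j, p j ^ θ
      ≤ C * √(n : ℝ) * K * (n : ℝ) ^ (θ - 1) * ∑' j, p j ^ θ := by gcongr; exact hC n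
    _ = C * K * (∑' j, p j ^ θ) * (n : ℝ) ^ (θ - 1 / 2) := by
        rw [Real.sqrt_eq_rpow, show θ - 1 / 2 = 1 / 2 + (θ - 1) by ring, Real.rpow_add hn']
        ring

/-- Lemma (de-Poissonization bounds): for independent `M_{n,j} ∼ Binomial(n, p_j)` and
`k_n ≥ n` with `k_n - n = O(√n)`, the increments of `∑_j E 1_{M_{n,j} ≥ 1}` and (under a
second-order condition on `α`) of `∑_j E g_{σ_n}(M_{n,j})` are `o(α(n)^{1/2})`. -/
theorem binomial_increments_negligible
    (p : ℕ → ℝ) (hp : ∀ j, 0 < p j) (hpsum : HasSum p 1)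
    (γ : ℝ) (hγ : γ ∈ Set.Ioo (0 : ℝ) 1)
    (hRV : RegularlyVarying (alpha0 p) γ)
    (σ : ℝ) (hσ : σ ∈ Set.Ioo (0 : ℝ) 1)
    (σn : ℕ → ℝ) (hσn : Tendsto σn atTop (𝓝 σ))
    (k : ℕ → ℕ) (hk1 : ∀ n, n ≤ k n)
    (hk2 : ∃ C : ℝ, ∀ n : ℕ, ((k n : ℝ) - (n : ℝ)) ≤ C * Real.sqrt (n : ℝ)) :
    Tendsto
      (fun n : ℕ =>
        (∑' j : ℕ, ((1 - (1 - p j) ^ (k n)) - (1 - (1 - p j) ^ n))) /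
          Real.sqrt (alpha0 p n))
      atTop (𝓝 0)
    ∧ (∀ (L : ℝ → ℝ) (C' β : ℝ), ContDiffOn ℝ 1 L (Set.Ici 1) → 0 < C' → β < γ →
        (∀ u : ℝ, 1 < u → |alpha0 p u - u ^ γ * L u| ≤ C' * u ^ β) →
        (∀ δ : ℝ, 0 < δ → ∃ Cδ : ℝ, 0 < Cδ ∧
          ∀ u : ℝ, 1 < u → |deriv L u| ≤ Cδ * u ^ (-1 + δ)) →
        Tendsto
          (fun n : ℕ =>
            (∑' j : ℕ, (Ebin (k n) (p j) (gfun (σn n)) - Ebin n (p j) (gfun (σn n)))) /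
              Real.sqrt (alpha0 p n))
          atTop (𝓝 0)) := by
  obtain ⟨θ, hγθ, hθ1⟩ := exists_between (show γ < (1 + γ) / 2 by linarith [hγ.2])
  obtain ⟨b, hγb, hbθ⟩ := exists_between hγθ
  obtain ⟨a, ha, haγ⟩ := exists_between (max_lt hγ.1 (by linarith : 2 * θ - 1 < γ))
  have hp1 : ∀ j, p j ≤ 1 := fun j => le_hasSum hpsum j fun i _ => (hp i).le
  have hp0 : Tendsto p atTop (𝓝 0) := hpsum.summable.tendsto_atTop_zero
  obtain ⟨C, c, hc, hup, hlow⟩ := hRV.exists_rpow_bounds (alpha0_mono hp hp0)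
    (eventually_alpha0_pos hp hp0) (le_of_max_le_left ha.le) haγ hγb
  have key := tendsto_tsum_Ebin_sub_div_sqrt (fun j => ⟨(hp j).le, hp1 j⟩)
    ⟨by linarith [hγ.1], by linarith [hγ.2]⟩ (by linarith [le_max_right 0 (2 * θ - 1)])
    (summable_rpow_of_alpha0_le hp hp1 hp0 (by linarith [hγ.1]) hbθ hup) hc hlow hk1 hk2
  refine ⟨?_, fun _ _ _ _ _ _ _ _ => ?_⟩
  · simpa only [Ebin_ite_eq_zero] using
      key (G := fun _ m => if m = 0 then 0 else 1)
        (.of_forall fun _ => ite_eq_zero_succ_sub_mem_Icc)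
  · obtain ⟨s, hσs, hs1⟩ := exists_between hσ.2
    refine key (K := 2 / (1 - s)) ?_
    filter_upwards [hσn.eventually_le_const hσs] with n hn
    exact gfun_succ_sub_mem_Icc hn ⟨hσ.1.le.trans hσs.le, hs1⟩

end
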